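/- arXiv:2303.16659 — 4 statements merged into one kernel-verified Lean document; each statement's English description precedes it below -/
import Mathlib

section
/- Let d, m ≥ 1. For each i ∈ {1,…,m} let f_i : ℝ^d → ℝ be differentiable, and suppose there are constants 0 < L'_i < L_i and 0 < M'_i < M_i such that f_i is L'_i-Lipschitz and ∇f_i is M'_i-Lipschitz on ℝ^d. Let x_0 ∈ ℝ^d be strictly feasible, i.e., f_i(x_0) < 0 for all i. Set L_max = max_{1≤i≤m} L_i, l_0 = min_{1≤i≤m} (−f_i(x_0))/L_max, and ν_0 = l_0/√d. Define S_i(x_0) = {x ∈ ℝ^d : f_i(x_0) + ⟨∇^{ν_0} f_i(x_0), x − x_0⟩ + 2 M_i ‖x − x_0‖² ≤ 0} and S(x_0) = ∩_{i=1}^m S_i(x_0). Then: (i) all samples used to compute the estimators are strictly feasible, i.e., f_i(x_0 + ν_0 e_j) < 0 for every i ∈ {1,…,m} and j ∈ {1,…,d}; (ii) x_0 ∈ S(x_0), so in particular S(x_0) is nonempty; (iii) every x ∈ S(x_0) is strictly feasible, i.e., f_i(x) < 0 for all i ∈ {1,…,m}. -/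
/-- The finite-difference gradient estimator
`∇^ν f(x) = ∑_{j=1}^d ((f(x + ν e_j) − f(x))/ν) e_j`. -/
noncomputable def fdGrad {d : ℕ} (f : EuclideanSpace ℝ (Fin d) → ℝ) (ν : ℝ)
    (x : EuclideanSpace ℝ (Fin d)) : EuclideanSpace ℝ (Fin d) :=
  ∑ j : Fin d, ((f (x + ν • EuclideanSpace.single j (1 : ℝ)) - f x) / ν) •
    EuclideanSpace.single j (1 : ℝ)

/-!
The sample points `x₀ + ν₀ e_j` lie within `ν₀ ≤ l₀` of `x₀`, and `L'ᵢ l₀ < Lmax l₀ ≤ -fᵢ(x₀)`, so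
Lipschitz continuity keeps them strictly feasible. The descent lemma bounds each coordinate of
`∇^ν f(x₀) - ∇f(x₀)` by `M' ν₀`, hence its norm by `M' √d ν₀ = M' l₀`. A point `x` of `S(x₀)` with
`‖x - x₀‖ ≤ l₀` is strictly feasible by Lipschitz continuity again; for `r = ‖x - x₀‖ > l₀` the
descent lemma and the estimator error give
`fᵢ(x) ≤ fᵢ(x₀) + ⟨∇^ν fᵢ(x₀), x - x₀⟩ + M' l₀ r + M' r² < fᵢ(x₀) + ⟨∇^ν fᵢ(x₀), x - x₀⟩ + 2 M r² ≤ 0`.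
-/

theorem lt_zero_of_norm_sub_le {E : Type*} [SeminormedAddCommGroup E] {f : E → ℝ} {L l : ℝ}
    {x y : E} (hlip : ∀ z, |f z - f x| ≤ L * ‖z - x‖) (hL : 0 ≤ L) (hl : L * l < -f x)
    (hy : ‖y - x‖ ≤ l) : f y < 0 := by
  have := le_of_abs_le (hlip y)
  linarith [mul_le_mul_of_nonneg_left hy hL]

theorem norm_sub_sub_fderiv_le {E F : Type*} [NormedAddCommGroup E] [NormedSpace ℝ E]
    [NormedAddCommGroup F] [NormedSpace ℝ F] {f : E → F} {M : ℝ} {x : E}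
    (hf : Differentiable ℝ f) (hM : 0 ≤ M)
    (hf' : ∀ z, ‖fderiv ℝ f z - fderiv ℝ f x‖ ≤ M * ‖z - x‖) (y : E) :
    ‖f y - f x - fderiv ℝ f x (y - x)‖ ≤ M * ‖y - x‖ ^ 2 := by
  have bound : ∀ z ∈ segment ℝ x y, ‖fderiv ℝ f z - fderiv ℝ f x‖ ≤ M * ‖y - x‖ := fun z hz =>
    (hf' z).trans (mul_le_mul_of_nonneg_left (norm_sub_le_of_mem_segment hz) hM)
  calc ‖f y - f x - fderiv ℝ f x (y - x)‖ ≤ M * ‖y - x‖ * ‖y - x‖ :=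
        (convex_segment x y).norm_image_sub_le_of_norm_fderiv_le' (fun z _ => hf z) bound
          (left_mem_segment ℝ x y) (right_mem_segment ℝ x y)
    _ = M * ‖y - x‖ ^ 2 := by ring

theorem abs_sub_sub_inner_gradient_le {E : Type*} [NormedAddCommGroup E] [InnerProductSpace ℝ E]
    [CompleteSpace E] {f : E → ℝ} {M : ℝ} {x : E} (hf : Differentiable ℝ f) (hM : 0 ≤ M)
    (hg : ∀ z, ‖gradient f z - gradient f x‖ ≤ M * ‖z - x‖) (y : E) :
    |f y - f x - inner ℝ (gradient f x) (y - x)| ≤ M * ‖y - x‖ ^ 2 := by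
  have hf' : ∀ z, ‖fderiv ℝ f z - fderiv ℝ f x‖ ≤ M * ‖z - x‖ := fun z => by
    rw [← toDual_gradient, ← toDual_gradient, ← map_sub, LinearIsometryEquiv.norm_map]
    exact hg z
  simpa only [inner_gradient_left, Real.norm_eq_abs] using norm_sub_sub_fderiv_le hf hM hf' y

theorem EuclideanSpace.norm_le_sqrt_card_mul {ι 𝕜 : Type*} [Fintype ι] [RCLike 𝕜]
    (v : EuclideanSpace 𝕜 ι) {c : ℝ} (hc : 0 ≤ c) (hv : ∀ j, ‖v j‖ ≤ c) :
    ‖v‖ ≤ √(Fintype.card ι) * c := by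
  calc ‖v‖ = √(∑ j, ‖v j‖ ^ 2) := EuclideanSpace.norm_eq v
    _ ≤ √(∑ _j : ι, c ^ 2) := by gcongr with j; exact hv j
    _ = √(Fintype.card ι) * c := by
      rw [Finset.sum_const, Finset.card_univ, nsmul_eq_mul, Real.sqrt_mul (Nat.cast_nonneg _),
        Real.sqrt_sq hc]

theorem fdGrad_apply {d : ℕ} (f : EuclideanSpace ℝ (Fin d) → ℝ) (ν : ℝ)
    (x : EuclideanSpace ℝ (Fin d)) (j : Fin d) :
    fdGrad f ν x j = (f (x + ν • EuclideanSpace.single j (1 : ℝ)) - f x) / ν := by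
  simp [fdGrad, Pi.single_apply]

theorem norm_fdGrad_sub_gradient_le {d : ℕ} {f : EuclideanSpace ℝ (Fin d) → ℝ} {M ν : ℝ}
    {x : EuclideanSpace ℝ (Fin d)} (hf : Differentiable ℝ f) (hM : 0 ≤ M)
    (hg : ∀ z, ‖gradient f z - gradient f x‖ ≤ M * ‖z - x‖) (hν : 0 < ν) :
    ‖fdGrad f ν x - gradient f x‖ ≤ √d * (M * ν) := by
  have hcoord : ∀ j, ‖(fdGrad f ν x - gradient f x) j‖ ≤ M * ν := fun j => by
    have hstep : ‖x + ν • EuclideanSpace.single j (1 : ℝ) - x‖ = ν := by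
      simp [norm_smul, abs_of_pos hν]
    have hinner : inner ℝ (gradient f x) (x + ν • EuclideanSpace.single j (1 : ℝ) - x)
        = ν * gradient f x j := by
      rw [add_sub_cancel_left, real_inner_smul_right, EuclideanSpace.inner_single_right]
      simp
    have htaylor := abs_sub_sub_inner_gradient_le hf hM hg (x + ν • EuclideanSpace.single j 1)
    rw [hstep, hinner] at htaylor
    rw [PiLp.sub_apply, fdGrad_apply, Real.norm_eq_abs, div_sub' hν.ne', abs_div,
      abs_of_pos hν, div_le_iff₀ hν]
    linarith
  simpa using EuclideanSpace.norm_le_sqrt_card_mul _ (mul_nonneg hM hν.le) hcoord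

theorem lt_zero_of_model_nonpos {E : Type*} [NormedAddCommGroup E] [InnerProductSpace ℝ E]
    [CompleteSpace E] {f : E → ℝ} {L M' M l : ℝ} {x₀ x g : E} (hf : Differentiable ℝ f)
    (hlip : ∀ z, |f z - f x₀| ≤ L * ‖z - x₀‖)
    (hglip : ∀ z, ‖gradient f z - gradient f x₀‖ ≤ M' * ‖z - x₀‖)
    (hL : 0 ≤ L) (hM' : 0 ≤ M') (hM'M : M' < M) (hl₀ : 0 ≤ l) (hl : L * l < -f x₀)
    (hg : ‖g - gradient f x₀‖ ≤ M' * l)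
    (hx : f x₀ + inner ℝ g (x - x₀) + 2 * M * ‖x - x₀‖ ^ 2 ≤ 0) : f x < 0 := by
  set r := ‖x - x₀‖
  rcases le_or_gt r l with hr | hr
  · exact lt_zero_of_norm_sub_le hlip hL hl hr
  have hr_pos : 0 < r := hl₀.trans_lt hr
  have htaylor := le_of_abs_le (abs_sub_sub_inner_gradient_le hf hM' hglip x)
  have herror : inner ℝ (gradient f x₀ - g) (x - x₀) ≤ M' * l * r := calc
    _ ≤ ‖gradient f x₀ - g‖ * r := real_inner_le_norm _ _
    _ ≤ M' * l * r := by rw [norm_sub_rev]; gcongr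
  rw [inner_sub_left] at herror
  calc f x ≤ f x₀ + inner ℝ (gradient f x₀) (x - x₀) + M' * r ^ 2 := by linarith
    _ ≤ f x₀ + inner ℝ g (x - x₀) + M' * l * r + M' * r ^ 2 := by linarith
    _ < f x₀ + inner ℝ g (x - x₀) + 2 * M * r ^ 2 := by
      nlinarith [mul_le_mul_of_nonneg_left hr.le (mul_nonneg hM' hr_pos.le),
        mul_lt_mul_of_pos_right hM'M (pow_pos hr_pos 2)]
    _ ≤ 0 := hx

theorem stmt1_general {d m : ℕ} (hd : 1 ≤ d)
    (f : Fin m → EuclideanSpace ℝ (Fin d) → ℝ)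
    (L L' M M' : Fin m → ℝ)
    (hL'pos : ∀ i, 0 < L' i) (hL'L : ∀ i, L' i < L i)
    (hM'pos : ∀ i, 0 < M' i) (hM'M : ∀ i, M' i < M i)
    (hdiff : ∀ i, Differentiable ℝ (f i))
    (hlip : ∀ i, ∀ x y : EuclideanSpace ℝ (Fin d), |f i x - f i y| ≤ L' i * ‖x - y‖)
    (hglip : ∀ i, ∀ x y : EuclideanSpace ℝ (Fin d),
      ‖gradient (f i) x - gradient (f i) y‖ ≤ M' i * ‖x - y‖)
    (x0 : EuclideanSpace ℝ (Fin d)) (hfeas : ∀ i, f i x0 < 0)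
    (Lmax l0 ν0 : ℝ)
    (hLmax : IsGreatest (Set.range L) Lmax)
    (hl0 : IsLeast (Set.range fun i => -(f i x0) / Lmax) l0)
    (hν0 : ν0 = l0 / Real.sqrt d) :
    (∀ i : Fin m, ∀ j : Fin d,
        f i (x0 + ν0 • EuclideanSpace.single j (1 : ℝ)) < 0) ∧
    (x0 ∈ ⋂ i : Fin m, {x : EuclideanSpace ℝ (Fin d) |
        f i x0 + (inner ℝ (fdGrad (f i) ν0 x0) (x - x0) : ℝ)
          + 2 * M i * ‖x - x0‖ ^ 2 ≤ 0}) ∧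
    (∀ x ∈ ⋂ i : Fin m, {x : EuclideanSpace ℝ (Fin d) |
        f i x0 + (inner ℝ (fdGrad (f i) ν0 x0) (x - x0) : ℝ)
          + 2 * M i * ‖x - x0‖ ^ 2 ≤ 0},
      ∀ i : Fin m, f i x < 0) := by
  obtain ⟨⟨i₀, hi₀⟩, hL_le⟩ := hLmax
  have hLmax_pos : 0 < Lmax := hi₀ ▸ (hL'pos i₀).trans (hL'L i₀)
  obtain ⟨⟨i₁, hi₁⟩, hl0_le⟩ := hl0
  have hl0_pos : 0 < l0 := hi₁ ▸ div_pos (neg_pos.2 (hfeas i₁)) hLmax_pos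
  have hL'l0 : ∀ i, L' i * l0 < -f i x0 := fun i => calc
    L' i * l0 < Lmax * l0 :=
      mul_lt_mul_of_pos_right ((hL'L i).trans_le (hL_le ⟨i, rfl⟩)) hl0_pos
    _ ≤ -f i x0 := (le_div_iff₀' hLmax_pos).1 (hl0_le ⟨i, rfl⟩)
  have hsqrt_d : 1 ≤ √(d : ℝ) := Real.one_le_sqrt.2 (by exact_mod_cast hd)
  have hν0_pos : 0 < ν0 := hν0 ▸ div_pos hl0_pos (one_pos.trans_le hsqrt_d)
  have hsqrt_d_ν0 : √(d : ℝ) * ν0 = l0 := by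
    rw [hν0]; field_simp
  refine ⟨fun i j => lt_zero_of_norm_sub_le (hlip i · x0) (hL'pos i).le (hL'l0 i) ?_,
    Set.mem_iInter.2 fun i => by simpa using (hfeas i).le, fun x hx i => ?_⟩
  · rw [add_sub_cancel_left, norm_smul, PiLp.norm_single, norm_one, mul_one,
      Real.norm_of_nonneg hν0_pos.le, hν0]
    exact div_le_self hl0_pos.le hsqrt_d
  · refine lt_zero_of_model_nonpos (hdiff i) (hlip i · x0) (hglip i · x0) (hL'pos i).le
      (hM'pos i).le (hM'M i) hl0_pos.le (hL'l0 i) ?_ (Set.mem_iInter.1 hx i)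
    calc _ ≤ √(d : ℝ) * (M' i * ν0) :=
          norm_fdGrad_sub_gradient_le (hdiff i) (hM'pos i).le (hglip i · x0) hν0_pos
      _ = M' i * l0 := by rw [← hsqrt_d_ν0]; ring

/-- Safety of the local feasible set built at a strictly feasible point `x₀`:
(i) all samples used in the finite-difference estimators are strictly feasible;
(ii) `x₀` belongs to the local feasible set `S(x₀)` (so it is nonempty);
(iii) every point of `S(x₀)` is strictly feasible. -/
theorem stmt1 {d m : ℕ} (hd : 1 ≤ d) (hm : 1 ≤ m)
    (f : Fin m → EuclideanSpace ℝ (Fin d) → ℝ)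
    (L L' M M' : Fin m → ℝ)
    (hL'pos : ∀ i, 0 < L' i) (hL'L : ∀ i, L' i < L i)
    (hM'pos : ∀ i, 0 < M' i) (hM'M : ∀ i, M' i < M i)
    (hdiff : ∀ i, Differentiable ℝ (f i))
    (hlip : ∀ i, ∀ x y : EuclideanSpace ℝ (Fin d), |f i x - f i y| ≤ L' i * ‖x - y‖)
    (hglip : ∀ i, ∀ x y : EuclideanSpace ℝ (Fin d),
      ‖gradient (f i) x - gradient (f i) y‖ ≤ M' i * ‖x - y‖)
    (x0 : EuclideanSpace ℝ (Fin d)) (hfeas : ∀ i, f i x0 < 0)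
    (Lmax l0 ν0 : ℝ)
    (hLmax : IsGreatest (Set.range L) Lmax)
    (hl0 : IsLeast (Set.range fun i => -(f i x0) / Lmax) l0)
    (hν0 : ν0 = l0 / Real.sqrt d) :
    (∀ i : Fin m, ∀ j : Fin d,
        f i (x0 + ν0 • EuclideanSpace.single j (1 : ℝ)) < 0) ∧
    (x0 ∈ ⋂ i : Fin m, {x : EuclideanSpace ℝ (Fin d) |
        f i x0 + (inner ℝ (fdGrad (f i) ν0 x0) (x - x0) : ℝ)
          + 2 * M i * ‖x - x0‖ ^ 2 ≤ 0}) ∧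
    (∀ x ∈ ⋂ i : Fin m, {x : EuclideanSpace ℝ (Fin d) |
        f i x0 + (inner ℝ (fdGrad (f i) ν0 x0) (x - x0) : ℝ)
          + 2 * M i * ‖x - x0‖ ^ 2 ≤ 0},
      ∀ i : Fin m, f i x < 0) :=
  stmt1_general hd f L L' M M' hL'pos hL'L hM'pos hM'M hdiff hlip hglip x0 hfeas Lmax l0 ν0 hLmax
    hl0 hν0
end

section
/- Let d ≥ 1, L, M > 0, and let f : ℝ^d → ℝ be differentiable, L-Lipschitz, and with M-Lipschitz gradient. Let x_0 ∈ ℝ^d satisfy f(x_0) < 0 and set l = −f(x_0)/L. Let g ∈ ℝ^d be any estimate of the gradient such that ‖g − ∇f(x_0)‖ ≤ M·l/2. Then every x ∈ ℝ^d satisfying f(x_0) + ⟨g, x − x_0⟩ + 2M‖x − x_0‖² ≤ 0 satisfies f(x) ≤ 0. -/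
/-!
Put `r = ‖x - x₀‖`, so that `f x₀ = -L l`. If `r ≤ l`, the Lipschitz bound alone gives
`f x ≤ f x₀ + L r ≤ 0`. If `r > l`, the descent lemma
`f x ≤ f x₀ + ⟪∇f x₀, x - x₀⟫ + M r²` together with
`⟪∇f x₀ - g, x - x₀⟫ ≤ (M l / 2) r ≤ M r²` (as `r > l / 2`) bounds `f x` by the left-hand side
of the defining inequality of the feasible set.
-/

open InnerProductSpace

section Descent

variable {E F : Type*} [NormedAddCommGroup E] [NormedSpace ℝ E]
  [NormedAddCommGroup F] [NormedSpace ℝ F]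

theorem norm_image_sub_sub_fderiv_le {f : E → F} (hf : Differentiable ℝ f) {M : ℝ}
    (hM : 0 ≤ M) {x y : E} (hf' : ∀ z, ‖fderiv ℝ f z - fderiv ℝ f x‖ ≤ M * ‖z - x‖) :
    ‖f y - f x - fderiv ℝ f x (y - x)‖ ≤ M * ‖y - x‖ ^ 2 := by
  set A := fderiv ℝ f x
  have hfA : ∀ z, HasFDerivAt (fun w => f w - A w) (fderiv ℝ f z - A) z := fun z =>
    (hf z).hasFDerivAt.sub A.hasFDerivAt
  have hbound : ∀ z ∈ segment ℝ x y, ‖fderiv ℝ f z - A‖ ≤ M * ‖y - x‖ := fun z hz =>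
    (hf' z).trans <| mul_le_mul_of_nonneg_left
      (by simpa only [norm_sub_rev] using norm_sub_le_of_mem_segment hz) hM
  have := (convex_segment x y).norm_image_sub_le_of_norm_hasFDerivWithin_le
    (fun z _ => (hfA z).hasFDerivWithinAt) hbound (left_mem_segment ℝ x y)
    (right_mem_segment ℝ x y)
  calc ‖f y - f x - A (y - x)‖ = ‖(f y - A y) - (f x - A x)‖ := by
        rw [map_sub]; congr 1; abel
    _ ≤ M * ‖y - x‖ * ‖y - x‖ := this
    _ = M * ‖y - x‖ ^ 2 := by ring

end Descent

section Gradient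

variable {E : Type*} [NormedAddCommGroup E] [InnerProductSpace ℝ E] [CompleteSpace E]

theorem norm_fderiv_sub_fderiv_eq_norm_gradient_sub_gradient (f : E → ℝ) (x y : E) :
    ‖fderiv ℝ f x - fderiv ℝ f y‖ = ‖gradient f x - gradient f y‖ := by
  rw [← toDual_gradient, ← toDual_gradient, ← map_sub, LinearIsometryEquiv.norm_map]

theorem image_le_add_inner_gradient_add_of_lipschitz_gradient {f : E → ℝ}
    (hf : Differentiable ℝ f) {M : ℝ} (hM : 0 ≤ M)
    (hglip : ∀ x y, ‖gradient f x - gradient f y‖ ≤ M * ‖x - y‖) (x y : E) :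
    f y ≤ f x + inner ℝ (gradient f x) (y - x) + M * ‖y - x‖ ^ 2 := by
  have h := norm_image_sub_sub_fderiv_le hf hM (x := x) (y := y) fun z => by
    rw [norm_fderiv_sub_fderiv_eq_norm_gradient_sub_gradient]; exact hglip z x
  rw [← toDual_gradient, toDual_apply_apply, Real.norm_eq_abs] at h
  linarith [(abs_le.1 h).2]

end Gradient

theorem stmt2_general {d : ℕ} (L M : ℝ) (hL : 0 < L) (hM : 0 < M)
    (f : EuclideanSpace ℝ (Fin d) → ℝ) (hf : Differentiable ℝ f)
    (hlip : ∀ x y : EuclideanSpace ℝ (Fin d), |f x - f y| ≤ L * ‖x - y‖)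
    (hglip : ∀ x y : EuclideanSpace ℝ (Fin d),
      ‖gradient f x - gradient f y‖ ≤ M * ‖x - y‖)
    (x0 : EuclideanSpace ℝ (Fin d))
    (l : ℝ) (hl : l = -(f x0) / L)
    (g : EuclideanSpace ℝ (Fin d)) (hg : ‖g - gradient f x0‖ ≤ M * l / 2)
    (x : EuclideanSpace ℝ (Fin d))
    (hx : f x0 + (inner ℝ g (x - x0) : ℝ) + 2 * M * ‖x - x0‖ ^ 2 ≤ 0) :
    f x ≤ 0 := by
  set r := ‖x - x0‖
  have hr : 0 ≤ r := norm_nonneg _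
  have hfx0 : f x0 = -(L * l) := by rw [hl]; field_simp
  rcases le_or_gt r l with hrl | hlr
  · have hfx : f x - f x0 ≤ L * r := (abs_le.1 (hlip x x0)).2
    nlinarith
  · have hdescent := image_le_add_inner_gradient_add_of_lipschitz_gradient hf hM.le hglip x0 x
    have hestimate : inner ℝ (gradient f x0 - g) (x - x0) ≤ M * l / 2 * r :=
      (real_inner_le_norm _ _).trans <| by
        rw [norm_sub_rev]; exact mul_le_mul_of_nonneg_right hg hr
    rw [inner_sub_left] at hestimate
    nlinarith [mul_nonneg (mul_nonneg hM.le hr) (show 0 ≤ r - l / 2 by linarith)]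

/-- Safety of the quadratic local feasible set built from an arbitrary gradient
estimate `g` with error at most `M·l/2`, where `l = −f(x₀)/L`: every point of
`{x : f(x₀) + ⟨g, x − x₀⟩ + 2M‖x − x₀‖² ≤ 0}` satisfies `f(x) ≤ 0`. -/
theorem stmt2 {d : ℕ} (hd : 1 ≤ d) (L M : ℝ) (hL : 0 < L) (hM : 0 < M)
    (f : EuclideanSpace ℝ (Fin d) → ℝ) (hf : Differentiable ℝ f)
    (hlip : ∀ x y : EuclideanSpace ℝ (Fin d), |f x - f y| ≤ L * ‖x - y‖)
    (hglip : ∀ x y : EuclideanSpace ℝ (Fin d),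
      ‖gradient f x - gradient f y‖ ≤ M * ‖x - y‖)
    (x0 : EuclideanSpace ℝ (Fin d)) (hx0 : f x0 < 0)
    (l : ℝ) (hl : l = -(f x0) / L)
    (g : EuclideanSpace ℝ (Fin d)) (hg : ‖g - gradient f x0‖ ≤ M * l / 2)
    (x : EuclideanSpace ℝ (Fin d))
    (hx : f x0 + (inner ℝ g (x - x0) : ℝ) + 2 * M * ‖x - x0‖ ^ 2 ≤ 0) :
    f x ≤ 0 :=
  stmt2_general L M hL hM f hf hlip hglip x0 l hl g hg x hx
end

section
/- Let d ≥ 1 and let f_0 : ℝ^d → ℝ be Lipschitz continuous. Let (x_k)_{k≥0} be a sequence in ℝ^d such that (f_0(x_k))_{k≥0} is nonincreasing and ‖x_{k+1} − x_k‖ → 0 as k → ∞. Suppose x_τ ∈ ℝ^d is an accumulation point of (x_k) (i.e., some subsequence converges to x_τ) and x_τ is a strict local minimizer of f_0: there exists ε_0 > 0 such that f_0(x) > f_0(x_τ) for every x with 0 < ‖x − x_τ‖ ≤ ε_0. Then the whole sequence (x_k) converges to x_τ. -/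
open Filter Topology

/-!
Since `f₀` is continuous and `f₀ (x k)` is nonincreasing, the values `f₀ (x k)` converge to
`f₀ x_τ` along the whole sequence. Fix `r ≤ ε₀`. By compactness, `f₀` exceeds `f₀ x_τ` by a
margin on the annulus `r / 2 ≤ ‖y - x_τ‖ ≤ r`, so eventually the iterates never lie in it. Once
the steps are shorter than `r / 2` and an iterate lies in the ball of radius `r / 2` (which
happens along the subsequence), no later iterate can jump over the annulus, so the sequence
stays in that ball.
-/

section

variable {X : Type*} [MetricSpace X]

lemma dist_lt_of_forall_step_le_of_avoid_annulus {x : ℕ → X} {c : X} {a b : ℝ} {N : ℕ}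
    (hstep : ∀ k ≥ N, dist (x (k + 1)) (x k) ≤ b - a)
    (havoid : ∀ k ≥ N, dist (x k) c < a ∨ b < dist (x k) c)
    {k₀ : ℕ} (hk₀ : N ≤ k₀) (hx₀ : dist (x k₀) c < a) :
    ∀ k ≥ k₀, dist (x k) c < a := by
  intro k hk
  induction k, hk using Nat.le_induction with
  | base => exact hx₀
  | succ k hk ih =>
    have hb : dist (x (k + 1)) c < b :=
      calc dist (x (k + 1)) c ≤ dist (x (k + 1)) (x k) + dist (x k) c := dist_triangle _ _ _
        _ < b := by linarith [hstep k (hk₀.trans hk)]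
    exact (havoid (k + 1) (by omega)).resolve_right hb.not_gt

lemma exists_gt_forall_le_on_annulus [ProperSpace X] {f : X → ℝ} (hf : Continuous f)
    {c : X} {ε₀ : ℝ} (hstrict : ∀ y, 0 < dist y c → dist y c ≤ ε₀ → f c < f y)
    {r : ℝ} (hr : 0 < r) (hrε₀ : r ≤ ε₀) :
    ∃ m, f c < m ∧ ∀ y, r / 2 ≤ dist y c → dist y c ≤ r → m ≤ f y := by
  have hcompact : IsCompact (Metric.closedBall c r \ Metric.ball c (r / 2)) :=
    (isCompact_closedBall c r).diff Metric.isOpen_ball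
  obtain ⟨m, hm, hle⟩ := hcompact.exists_forall_le' hf.continuousOn fun y ⟨hy, hy'⟩ =>
    hstrict y (by simp only [Metric.mem_ball, not_lt] at hy'; linarith)
      ((Metric.mem_closedBall.mp hy).trans hrε₀)
  exact ⟨m, hm, fun y hy hy' => hle y ⟨Metric.mem_closedBall.mpr hy', by simpa using hy⟩⟩

theorem tendsto_of_antitone_of_isStrictLocalMin [ProperSpace X] {f : X → ℝ}
    (hf : Continuous f) {x : ℕ → X} (hmono : Antitone (f ∘ x))
    (hstep : Tendsto (fun k => dist (x (k + 1)) (x k)) atTop (𝓝 0))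
    {c : X} {φ : ℕ → ℕ} (hφ : Tendsto φ atTop atTop) (hsub : Tendsto (x ∘ φ) atTop (𝓝 c))
    {ε₀ : ℝ} (hε₀ : 0 < ε₀) (hstrict : ∀ y, 0 < dist y c → dist y c ≤ ε₀ → f c < f y) :
    Tendsto x atTop (𝓝 c) := by
  have hvalues : Tendsto (f ∘ x) atTop (𝓝 (f c)) :=
    (tendsto_iff_tendsto_subseq_of_antitone hmono hφ).mpr ((hf.tendsto c).comp hsub)
  refine Metric.tendsto_atTop.mpr fun ε hε => ?_
  set r := min ε ε₀
  have hr : 0 < r := lt_min hε hε₀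
  obtain ⟨m, hm, hannulus⟩ := exists_gt_forall_le_on_annulus hf hstrict hr (min_le_right _ _)
  obtain ⟨N, hN⟩ := eventually_atTop.mp <|
    (hvalues.eventually (gt_mem_nhds hm)).and (hstep.eventually (ge_mem_nhds (half_pos hr)))
  have havoid : ∀ k ≥ N, dist (x k) c < r / 2 ∨ r < dist (x k) c := fun k hk => by
    by_contra! h
    exact lt_irrefl _ ((hN k hk).1.trans_le (hannulus (x k) h.1 h.2))
  have hstep' : ∀ k ≥ N, dist (x (k + 1)) (x k) ≤ r - r / 2 := fun k hk => by
    linarith [(hN k hk).2]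
  obtain ⟨p, hpN, hp⟩ := ((hφ.eventually_ge_atTop N).and
    (hsub.eventually (Metric.ball_mem_nhds c (half_pos hr)))).exists
  refine ⟨φ p, fun k hk => ?_⟩
  have := dist_lt_of_forall_step_le_of_avoid_annulus hstep' havoid hpN hp k hk
  linarith [min_le_left ε ε₀]

end

theorem stmt7_general {d : ℕ}
    (f0 : EuclideanSpace ℝ (Fin d) → ℝ)
    (ℓ : ℝ)
    (hlip : ∀ x y : EuclideanSpace ℝ (Fin d), |f0 x - f0 y| ≤ ℓ * ‖x - y‖)
    (x : ℕ → EuclideanSpace ℝ (Fin d))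
    (hmono : Antitone fun k => f0 (x k))
    (hstep : Tendsto (fun k => ‖x (k + 1) - x k‖) atTop (𝓝 0))
    (xτ : EuclideanSpace ℝ (Fin d))
    (hacc : ∃ φ : ℕ → ℕ, StrictMono φ ∧ Tendsto (fun p => x (φ p)) atTop (𝓝 xτ))
    (ε0 : ℝ) (hε0 : 0 < ε0)
    (hstrict : ∀ y : EuclideanSpace ℝ (Fin d),
      0 < ‖y - xτ‖ → ‖y - xτ‖ ≤ ε0 → f0 xτ < f0 y) :
    Tendsto x atTop (𝓝 xτ) := by
  obtain ⟨φ, hφ, hsub⟩ := hacc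
  have hf : Continuous f0 :=
    (LipschitzWith.of_dist_le' (K := ℓ) fun a b => by simpa [dist_eq_norm] using hlip a b).continuous
  simp only [← dist_eq_norm] at hstep hstrict
  exact tendsto_of_antitone_of_isStrictLocalMin hf hmono hstep hφ.tendsto_atTop hsub hε0 hstrict

/-- Convergence lemma: if the objective values are nonincreasing, the step
sizes vanish, and some accumulation point `x_τ` is a strict local minimizer of
the Lipschitz objective `f₀`, then the whole sequence converges to `x_τ`. -/
theorem stmt7 {d : ℕ} (hd : 1 ≤ d)
    (f0 : EuclideanSpace ℝ (Fin d) → ℝ)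
    (ℓ : ℝ) (hℓ : 0 < ℓ)
    (hlip : ∀ x y : EuclideanSpace ℝ (Fin d), |f0 x - f0 y| ≤ ℓ * ‖x - y‖)
    (x : ℕ → EuclideanSpace ℝ (Fin d))
    (hmono : Antitone fun k => f0 (x k))
    (hstep : Tendsto (fun k => ‖x (k + 1) - x k‖) atTop (𝓝 0))
    (xτ : EuclideanSpace ℝ (Fin d))
    (hacc : ∃ φ : ℕ → ℕ, StrictMono φ ∧ Tendsto (fun p => x (φ p)) atTop (𝓝 xτ))
    (ε0 : ℝ) (hε0 : 0 < ε0)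
    (hstrict : ∀ y : EuclideanSpace ℝ (Fin d),
      0 < ‖y - xτ‖ → ‖y - xτ‖ ≤ ε0 → f0 xτ < f0 y) :
    Tendsto x atTop (𝓝 xτ) :=
  stmt7_general f0 ℓ hlip x hmono hstep xτ hacc ε0 hε0 hstrict
end

section
/- Let d, m ≥ 1, let c_1, …, c_m ≤ 0 be real numbers, g_1, …, g_m ∈ ℝ^d, M_1, …, M_m > 0, and x_c ∈ ℝ^d. Suppose the active index set A = {i ∈ {1,…,m} : c_i = 0} is nonempty and the vectors {g_i : i ∈ A} are linearly independent. Then there exists x ∈ ℝ^d such that c_i + ⟨g_i, x − x_c⟩ + 2 M_i ‖x − x_c‖² < 0 for every i ∈ {1,…,m}; i.e., the intersection of the quadratic proxy sets {x : c_i + ⟨g_i, x − x_c⟩ + 2M_i‖x − x_c‖² ≤ 0} has a strictly feasible point. -/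
/-!
Choose a direction `v` with `⟪g i, v⟫ = -1` for every active constraint, which LICQ makes
possible, and move from `x_c` a short distance `t > 0` along `v`. Each proxy becomes the
quadratic `c i + t ⟪g i, v⟫ + 2 M i ‖v‖² t²` in `t`: for inactive constraints it is near
`c i < 0` by continuity, and for active ones its linear term `-t` dominates the quadratic term.
-/

open scoped RealInnerProductSpace
open Filter Topology

theorem LinearIndependent.exists_inner_eq {ι E : Type*} [Fintype ι]
    [NormedAddCommGroup E] [InnerProductSpace ℝ E] {g : ι → E}
    (hg : LinearIndependent ℝ g) (y : ι → ℝ) : ∃ v : E, ∀ i, ⟪g i, v⟫ = y i := by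
  set B : (ι → ℝ) →ₗ[ℝ] E →ₗ[ℝ] ℝ := innerₗ E ∘ₗ Fintype.linearCombination ℝ g
  have hB : Function.Injective B := fun a b hab =>
    hg.fintypeLinearCombination_injective <|
      ext_inner_right ℝ fun w => LinearMap.congr_fun hab w
  -- `B.flip : E → Dual (ι → ℝ)` is onto since `B` is injective and `ι → ℝ` is finite-dimensional.
  obtain ⟨v, hv⟩ := LinearMap.flip_surjective_iff₁.mpr hB (Fintype.linearCombination ℝ y)
  refine ⟨v, fun i => ?_⟩
  classical
  simpa [B, Fintype.linearCombination_apply, Pi.single_apply] using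
    LinearMap.congr_fun hv (Pi.single i 1)

theorem eventually_quadratic_neg_nhdsGT {a b c : ℝ} (hc : c ≤ 0) (hb : c = 0 → b < 0) :
    ∀ᶠ t in 𝓝[>] 0, c + b * t + a * t ^ 2 < 0 := by
  rcases hc.lt_or_eq with hc | rfl
  · have hlim : Tendsto (fun t : ℝ => c + b * t + a * t ^ 2) (𝓝 0)
        (𝓝 (c + b * 0 + a * 0 ^ 2)) :=
      Continuous.tendsto (by fun_prop) 0
    exact nhdsWithin_le_nhds (hlim.eventually_lt_const (by simpa using hc))
  · have hlim : Tendsto (fun t : ℝ => b + a * t) (𝓝 0) (𝓝 (b + a * 0)) :=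
      Continuous.tendsto (by fun_prop) 0
    filter_upwards [self_mem_nhdsWithin,
      nhdsWithin_le_nhds (hlim.eventually_lt_const (by simpa using hb rfl))]
      with t (ht : 0 < t) hbt
    nlinarith

theorem stmt8_general {d m : ℕ}
    (c : Fin m → ℝ) (hc : ∀ i, c i ≤ 0)
    (g : Fin m → EuclideanSpace ℝ (Fin d))
    (M : Fin m → ℝ)
    (xc : EuclideanSpace ℝ (Fin d))
    (hLICQ : LinearIndependent ℝ (fun i : {i : Fin m // c i = 0} => g i.1)) :
    ∃ x : EuclideanSpace ℝ (Fin d), ∀ i : Fin m,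
      c i + (inner ℝ (g i) (x - xc) : ℝ) + 2 * M i * ‖x - xc‖ ^ 2 < 0 := by
  obtain ⟨v, hv⟩ := hLICQ.exists_inner_eq fun _ => -1
  have hactive (i : Fin m) (hi : c i = 0) : ⟪g i, v⟫ < 0 := by
    rw [hv ⟨i, hi⟩]
    norm_num
  have hsmall : ∀ᶠ t in 𝓝[>] 0, ∀ i,
      c i + ⟪g i, v⟫ * t + 2 * M i * ‖v‖ ^ 2 * t ^ 2 < 0 :=
    eventually_all.mpr fun i => eventually_quadratic_neg_nhdsGT (hc i) (hactive i)
  obtain ⟨t, ht⟩ := hsmall.exists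
  refine ⟨xc + t • v, fun i => ?_⟩
  have hproxy : c i + ⟪g i, xc + t • v - xc⟫ + 2 * M i * ‖xc + t • v - xc‖ ^ 2
      = c i + ⟪g i, v⟫ * t + 2 * M i * ‖v‖ ^ 2 * t ^ 2 := by
    rw [add_sub_cancel_left, inner_smul_right, norm_smul, Real.norm_eq_abs, mul_pow, sq_abs]
    ring
  exact hproxy ▸ ht i

/-- Under LICQ at a feasible point, the intersection of the quadratic proxy
sets `{x : c_i + ⟨g_i, x − x_c⟩ + 2M_i‖x − x_c‖² ≤ 0}` has a strictly feasible
point. -/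
theorem stmt8 {d m : ℕ} (hd : 1 ≤ d) (hm : 1 ≤ m)
    (c : Fin m → ℝ) (hc : ∀ i, c i ≤ 0)
    (g : Fin m → EuclideanSpace ℝ (Fin d))
    (M : Fin m → ℝ) (hM : ∀ i, 0 < M i)
    (xc : EuclideanSpace ℝ (Fin d))
    (hA : ∃ i : Fin m, c i = 0)
    (hLICQ : LinearIndependent ℝ (fun i : {i : Fin m // c i = 0} => g i.1)) :
    ∃ x : EuclideanSpace ℝ (Fin d), ∀ i : Fin m,
      c i + (inner ℝ (g i) (x - xc) : ℝ) + 2 * M i * ‖x - xc‖ ^ 2 < 0 :=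
  stmt8_general c hc g M xc hLICQ
end
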